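/- arXiv:math-ph/0309058 — 2 statements merged into one kernel-verified Lean document; each statement's English description precedes it below -/
import Mathlib

section
/- The number of permutations P of {1,...,2n} that are involutions, satisfy P(2n+1−i) = 2n+1−P(i) for all i, and have exactly m_+ indices i in {1,...,n} with P(i)=i and exactly m_- indices i in {1,...,n} with P(i)=2n+1−i, equals t_{n,m_+,m_-} := n!/(m_+! m_-! ((n−m_+−m_-)/2)!), provided n−m_+−m_- is even and nonnegative (and the count is 0 otherwise). -/
/-!
Let `r` be a fixed-point-free involution (here `Fin.rev`) and count the involutions commuting
with `r` that are supported on an `r`-stable set `s` with `#s = 2N`. Follow a point `a ∈ s`: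
either `P a = a`, or `P a = r a`, or `P a = c` for one of the `2N - 2` points `c ∉ {a, r a}`.
In each case `P` agrees on the block `T = {a, r a}` resp. `{a, r a, c, r c}` with one fixed
involution `τ`, and `P ↦ τ * P` identifies these `P` with the involutions supported on `s \ T`.
Hence the counts obey `t(N, p, m) = t(N-1, p-1, m) + t(N-1, p, m-1) + 2(N-1) t(N-2, p, m)`,
the recursion satisfied by `N! / (p! m! k!)` with `p + m + 2k = N`.
-/

open scoped Classical

open Finset Function Equiv

section

variable {α : Type*} [DecidableEq α] {r : α → α} {s T : Finset α}

lemma Function.Involutive.apply_mem_of_forall_notMem {τ : α → α} (hτ : Involutive τ)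
    (hτT : ∀ x ∉ T, τ x = x) {x : α} (hx : x ∈ T) : τ x ∈ T := by
  by_contra h
  have := hτT _ h
  rw [hτ] at this
  exact h (this ▸ hx)

lemma Equiv.Perm.apply_notMem_of_forall_mem_eq {P : Perm α} {τ : α → α} (hτ : Involutive τ)
    (hτT : ∀ x ∉ T, τ x = x) (hP : ∀ x ∈ T, P x = τ x) {x : α} (hx : x ∉ T) :
    P x ∉ T := by
  intro hPx
  have hτPx := hτ.apply_mem_of_forall_notMem hτT hPx
  have : τ (P x) = x := P.injective (by rw [hP _ hτPx, hτ])
  exact hx (this ▸ hτPx)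

lemma card_filter_eq_add_card_filter_sdiff {β : Type*} [DecidableEq β] {P Q τ : α → β}
    (hTs : T ⊆ s) (hP : ∀ x ∈ T, P x = τ x) (hQ : ∀ x ∉ T, Q x = P x) (f : α → β) :
    #{x ∈ s | P x = f x} = #{x ∈ T | τ x = f x} + #{x ∈ s \ T | Q x = f x} := by
  simp only [card_filter]
  rw [← sum_sdiff hTs, add_comm]
  congr 1
  · exact sum_congr rfl fun x hx => by rw [hP x hx]
  · exact sum_congr rfl fun x hx => by rw [hQ x (mem_sdiff.1 hx).2]

lemma forall_mem_sdiff_pair_apply_mem (hr : Involutive r) (hs : ∀ x ∈ s, r x ∈ s) {a : α} :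
    ∀ x ∈ s \ {a, r a}, r x ∈ s \ {a, r a} := by
  intro x hx
  simp only [mem_sdiff, mem_insert, mem_singleton, not_or] at hx ⊢
  exact ⟨hs x hx.1, fun h => hx.2.2 (by rw [← h, hr]), fun h => hx.2.1 (hr.injective h)⟩

lemma card_sdiff_pair (hr₀ : ∀ x, r x ≠ x) (hs : ∀ x ∈ s, r x ∈ s) {a : α}
    (ha : a ∈ s) :
    #(s \ {a, r a}) = #s - 2 := by
  rw [card_sdiff_of_subset (by simp [insert_subset_iff, ha, hs a ha]), card_pair (hr₀ a).symm]

lemma Equiv.Perm.Disjoint.involutive_swap_mul_swap {a b c d : α}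
    (h : (swap a b).Disjoint (swap c d)) : Involutive (swap a b * swap c d) := by
  have : swap a b * swap c d * (swap a b * swap c d) = 1 := by
    rw [h.commute.symm.mul_mul_mul_comm, swap_mul_self, swap_mul_self, one_mul]
  exact Perm.congr_fun this

lemma swap_mul_swap_apply_comm (hr : Involutive r) {a c : α}
    (h : (swap a c).Disjoint (swap (r a) (r c))) (x : α) :
    (swap a c * swap (r a) (r c)) (r x) = r ((swap a c * swap (r a) (r c)) x) := by
  have h1 := hr.injective.swap_apply a c x
  have h2 := hr.injective.swap_apply (r a) (r c) (swap a c x)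
  rw [hr a, hr c] at h2
  simp only [Perm.mul_apply, h1, h2]
  exact congrArg r (Perm.congr_fun h.commute.eq x).symm

end

variable {α : Type*} [Fintype α] [DecidableEq α]

/-- The fixed points of `P` in `s` and the points it sends to their `r`-image are unions of
`r`-orbits, hence the factors `2`. -/
noncomputable def symmInvolutions (r : α → α) (s : Finset α) (p m : ℕ) : Finset (Perm α) :=
  {P | Involutive P ∧ (∀ x, P (r x) = r (P x)) ∧ (∀ x ∉ s, P x = x) ∧
    #{x ∈ s | P x = x} = 2 * p ∧ #{x ∈ s | P x = r x} = 2 * m}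

variable {r : α → α} {s T : Finset α} {P τ : Perm α} {p m p₀ m₀ : ℕ} {a c : α}

lemma mem_symmInvolutions :
    P ∈ symmInvolutions r s p m ↔ Involutive P ∧ (∀ x, P (r x) = r (P x)) ∧
      (∀ x ∉ s, P x = x) ∧ #{x ∈ s | P x = x} = 2 * p ∧
      #{x ∈ s | P x = r x} = 2 * m := by
  simp [symmInvolutions]

lemma apply_mem_of_mem_symmInvolutions (hP : P ∈ symmInvolutions r s p m) (ha : a ∈ s) :
    P a ∈ s := by
  obtain ⟨hinv, -, hsupp, -⟩ := mem_symmInvolutions.1 hP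
  by_contra h
  have := hsupp _ h
  rw [hinv] at this
  exact h (this ▸ ha)

lemma symmInvolutions_empty : symmInvolutions r ∅ 0 0 = {1} := by
  ext P
  simp only [mem_symmInvolutions, notMem_empty, not_false_eq_true, forall_const, filter_empty,
    card_empty, mul_zero, and_true, mem_singleton]
  refine ⟨fun h => Equiv.ext h.2.2, ?_⟩
  rintro rfl
  exact ⟨fun _ => rfl, fun _ => rfl, fun _ => rfl⟩

/-- `τ * P` is the identity on `T` and agrees with `P` off `T`. -/
lemma mem_symmInvolutions_iff_mul_mem (hr : Involutive r) (hTs : T ⊆ s)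
    (hT : ∀ x ∈ T, r x ∈ T) (hτ : Involutive τ) (hτr : ∀ x, τ (r x) = r (τ x))
    (hτT : ∀ x ∉ T, τ x = x) (hfix : #{x ∈ T | τ x = x} = 2 * p₀)
    (hanti : #{x ∈ T | τ x = r x} = 2 * m₀) (hP : ∀ x ∈ T, P x = τ x) :
    P ∈ symmInvolutions r s (p + p₀) (m + m₀) ↔
      τ * P ∈ symmInvolutions r (s \ T) p m := by
  set Q := τ * P
  have onT (x) (hx : x ∈ T) : Q x = x := by simp [Q, hP x hx, hτ x]
  have offT (x) (hx : x ∉ T) : Q x = P x :=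
    hτT _ (P.apply_notMem_of_forall_mem_eq hτ hτT hP hx)
  have inv : Involutive P ↔ Involutive Q := forall_congr' fun x => by
    by_cases hx : x ∈ T
    · rw [onT x hx, onT x hx, hP x hx, hP _ (hτ.apply_mem_of_forall_notMem hτT hx), hτ]
    · rw [offT x hx, offT _ (P.apply_notMem_of_forall_mem_eq hτ hτT hP hx)]
  have comm : (∀ x, P (r x) = r (P x)) ↔ ∀ x, Q (r x) = r (Q x) := forall_congr' fun x => by
    by_cases hx : x ∈ T
    · rw [onT x hx, onT _ (hT x hx), hP x hx, hP _ (hT x hx), hτr]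
      exact iff_of_true rfl rfl
    · rw [offT x hx, offT _ fun h => hx (hr x ▸ hT _ h)]
  have supp : (∀ x ∉ s, P x = x) ↔ ∀ x ∉ s \ T, Q x = x := by
    refine ⟨fun h x hx => ?_, fun h x hx => ?_⟩
    · by_cases hxT : x ∈ T
      · exact onT x hxT
      · rw [offT x hxT]
        exact h x fun hxs => hx (mem_sdiff.2 ⟨hxs, hxT⟩)
    · have hxT : x ∉ T := fun h => hx (hTs h)
      rw [← offT x hxT]
      exact h x fun h => hx (mem_sdiff.1 h).1
  rw [mem_symmInvolutions, mem_symmInvolutions,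
    card_filter_eq_add_card_filter_sdiff hTs hP offT (fun x => x),
    card_filter_eq_add_card_filter_sdiff hTs hP offT r, hfix, hanti]
  exact and_congr inv (and_congr comm (and_congr supp (and_congr (by omega) (by omega))))

lemma card_filter_forall_eq_symmInvolutions (hr : Involutive r) (hTs : T ⊆ s)
    (hT : ∀ x ∈ T, r x ∈ T) (hτ : Involutive τ) (hτr : ∀ x, τ (r x) = r (τ x))
    (hτT : ∀ x ∉ T, τ x = x) (hfix : #{x ∈ T | τ x = x} = 2 * p₀)
    (hanti : #{x ∈ T | τ x = r x} = 2 * m₀) :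
    #{P ∈ symmInvolutions r s (p + p₀) (m + m₀) | ∀ x ∈ T, P x = τ x} =
      #(symmInvolutions r (s \ T) p m) := by
  have hττ : τ * τ = 1 := Equiv.ext hτ
  refine card_nbij' (τ * ·) (τ * ·) (fun P hP => ?_) (fun Q hQ => ?_)
    (fun P _ => by simp [← mul_assoc, hττ]) (fun Q _ => by simp [← mul_assoc, hττ])
  · obtain ⟨hP, hPT⟩ := mem_filter.1 hP
    exact (mem_symmInvolutions_iff_mul_mem hr hTs hT hτ hτr hτT hfix hanti hPT).1 hP
  · have hQT (x) (hx : x ∈ T) : Q x = x :=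
      (mem_symmInvolutions.1 hQ).2.2.1 x fun h => (mem_sdiff.1 h).2 hx
    have hτQ : ∀ x ∈ T, (τ * Q) x = τ x := fun x hx => by simp [hQT x hx]
    refine mem_filter.2 ⟨?_, hτQ⟩
    rw [mem_symmInvolutions_iff_mul_mem hr hTs hT hτ hτr hτT hfix hanti hτQ, ← mul_assoc,
      hττ, one_mul]
    exact hQ

lemma card_filter_apply_eq_self (hr : Involutive r) (hr₀ : ∀ x, r x ≠ x)
    (hs : ∀ x ∈ s, r x ∈ s) (ha : a ∈ s) :
    #{P ∈ symmInvolutions r s (p + 1) m | P a = a} =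
      #(symmInvolutions r (s \ {a, r a}) p m) := by
  rw [← card_filter_forall_eq_symmInvolutions (τ := 1) (p₀ := 1) (m₀ := 0) hr
    (by simp [insert_subset_iff, ha, hs a ha]) (by simp [hr a]) (fun _ => rfl) (fun _ => rfl)
    (fun _ _ => rfl) (by simp [card_pair (hr₀ a).symm]) (by simp [fun x => (hr₀ x).symm])]
  refine congrArg card (filter_congr fun P hP => ?_)
  have hcomm := (mem_symmInvolutions.1 hP).2.1
  simp only [mem_insert, mem_singleton, forall_eq_or_imp, forall_eq, Perm.coe_one, id_eq]
  exact ⟨fun h => ⟨h, by rw [hcomm, h]⟩, And.left⟩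

lemma filter_apply_eq_self_symmInvolutions_zero (ha : a ∈ s) :
    {P ∈ symmInvolutions r s 0 m | P a = a} = ∅ := by
  refine filter_false_of_mem fun P hP hPa => ?_
  have := (mem_symmInvolutions.1 hP).2.2.2.1
  rw [mul_zero, card_eq_zero, filter_eq_empty_iff] at this
  exact this ha hPa

lemma card_filter_apply_eq_apply (hr : Involutive r) (hr₀ : ∀ x, r x ≠ x)
    (hs : ∀ x ∈ s, r x ∈ s) (ha : a ∈ s) :
    #{P ∈ symmInvolutions r s p (m + 1) | P a = r a} =
      #(symmInvolutions r (s \ {a, r a}) p m) := by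
  have hτr (x) : swap a (r a) (r x) = r (swap a (r a) x) := by
    have := hr.injective.swap_apply (r a) a x
    rwa [hr a, swap_comm (r a) a] at this
  rw [← card_filter_forall_eq_symmInvolutions (τ := swap a (r a)) (p₀ := 0) (m₀ := 1) hr
    (by simp [insert_subset_iff, ha, hs a ha]) (by simp [hr a]) (swap_apply_self _ _) hτr
    (fun x hx => swap_apply_of_ne_of_ne (by simp_all) (by simp_all))
    (by simp [hr₀ a, (hr₀ a).symm])
    (by rw [filter_true_of_mem (by simp [hr a]), card_pair (hr₀ a).symm])]
  refine congrArg card (filter_congr fun P hP => ?_)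
  have hcomm := (mem_symmInvolutions.1 hP).2.1
  simp only [mem_insert, mem_singleton, forall_eq_or_imp, forall_eq, swap_apply_left,
    swap_apply_right]
  exact ⟨fun h => ⟨h, by rw [hcomm, h, hr]⟩, And.left⟩

lemma filter_apply_eq_apply_symmInvolutions_zero (ha : a ∈ s) :
    {P ∈ symmInvolutions r s p 0 | P a = r a} = ∅ := by
  refine filter_false_of_mem fun P hP hPa => ?_
  have := (mem_symmInvolutions.1 hP).2.2.2.2
  rw [mul_zero, card_eq_zero, filter_eq_empty_iff] at this
  exact this ha hPa

lemma card_filter_apply_eq_of_mem_sdiff (hr : Involutive r) (hr₀ : ∀ x, r x ≠ x)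
    (hs : ∀ x ∈ s, r x ∈ s) (ha : a ∈ s) (hc : c ∈ s \ {a, r a}) :
    #{P ∈ symmInvolutions r s p m | P a = c} =
      #(symmInvolutions r ((s \ {a, r a}) \ {c, r c}) p m) := by
  obtain ⟨hcs, hca, hcra⟩ : c ∈ s ∧ c ≠ a ∧ c ≠ r a := by simpa [not_or] using hc
  have hrca : r c ≠ a := fun h => hcra (by rw [← h, hr])
  have hrcra : r c ≠ r a := fun h => hca (hr.injective h)
  have hdisj : (swap a c).Disjoint (swap (r a) (r c)) := Perm.disjoint_swap_swap (by
    simp [hca.symm, (hr₀ a).symm, hrca.symm, hcra, (hr₀ c).symm, hrcra.symm])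
  set τ := swap a c * swap (r a) (r c)
  have hτa : τ a = c := by simp [τ, swap_apply_of_ne_of_ne, (hr₀ a).symm, hrca.symm]
  have hτra : τ (r a) = r c := by simp [τ, swap_apply_of_ne_of_ne, hrca, hr₀ c]
  have hτc : τ c = a := by simp [τ, swap_apply_of_ne_of_ne, hcra, (hr₀ c).symm]
  have hτrc : τ (r c) = r a := by simp [τ, swap_apply_of_ne_of_ne, hr₀ a, hcra.symm]
  rw [sdiff_sdiff_left,
    ← card_filter_forall_eq_symmInvolutions (τ := τ) (p₀ := 0) (m₀ := 0) hr
    (by simp [insert_subset_iff, ha, hs a ha, hcs, hs c hcs]) (by simp [hr a, hr c])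
    hdisj.involutive_swap_mul_swap (swap_mul_swap_apply_comm hr hdisj)
    (fun x hx => by simp_all [τ, swap_apply_of_ne_of_ne])
    (by simp [hτa, hτra, hτc, hτrc, hca, hca.symm, hrcra, hrcra.symm])
    (by simp [hτa, hτra, hτc, hτrc, hr a, hr c, hcra, hcra.symm, hrca, hrca.symm])]
  refine congrArg card (filter_congr fun P hP => ?_)
  obtain ⟨hinv, hcomm, -⟩ := mem_symmInvolutions.1 hP
  simp only [sup_eq_union, forall_mem_union, forall_mem_insert, mem_singleton, forall_eq, hτa,
    hτra, hτc, hτrc]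
  refine ⟨fun h => ⟨⟨h, by rw [hcomm, h]⟩, ?_, ?_⟩, fun h => h.1.1⟩
  · rw [← h, hinv]
  · rw [hcomm, ← h, hinv]

lemma card_symmInvolutions_eq_add_sum (hr₀ : ∀ x, r x ≠ x) (hs : ∀ x ∈ s, r x ∈ s)
    (ha : a ∈ s) :
    #(symmInvolutions r s p m) = #{P ∈ symmInvolutions r s p m | P a = a} +
      #{P ∈ symmInvolutions r s p m | P a = r a} +
      ∑ c ∈ s \ {a, r a}, #{P ∈ symmInvolutions r s p m | P a = c} := by
  rw [card_eq_sum_card_fiberwise fun P hP => apply_mem_of_mem_symmInvolutions hP ha,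
    ← sum_sdiff (s₁ := {a, r a}) (by simp [insert_subset_iff, ha, hs a ha]),
    sum_pair (hr₀ a).symm, add_comm]

lemma card_symmInvolutions_eq_zero (hr : Involutive r) (hr₀ : ∀ x, r x ≠ x)
    (hs : ∀ x ∈ s, r x ∈ s) {N : ℕ} (hN : #s = 2 * N) (hpm : ∀ k, p + m + 2 * k ≠ N) :
    #(symmInvolutions r s p m) = 0 := by
  induction N using Nat.strong_induction_on generalizing s p m with
  | _ N ih =>
  obtain rfl | ⟨a, ha⟩ := s.eq_empty_or_nonempty
  · refine card_eq_zero.2 (eq_empty_of_forall_notMem fun P hP => ?_)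
    have := mem_symmInvolutions.1 hP
    simp only [filter_empty, card_empty] at this hN
    exact hpm 0 (by omega)
  have hN0 : 0 < N := by have := card_pos.2 ⟨a, ha⟩; omega
  have hs' := forall_mem_sdiff_pair_apply_mem hr hs (a := a)
  have hN' : #(s \ {a, r a}) = 2 * (N - 1) := by rw [card_sdiff_pair hr₀ hs ha]; omega
  have fixed : #{P ∈ symmInvolutions r s p m | P a = a} = 0 := by
    cases p with
    | zero => rw [filter_apply_eq_self_symmInvolutions_zero ha, card_empty]
    | succ p =>
      rw [card_filter_apply_eq_self hr hr₀ hs ha]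
      exact ih _ (by omega) hs' hN' fun k => by have := hpm k; omega
  have anti : #{P ∈ symmInvolutions r s p m | P a = r a} = 0 := by
    cases m with
    | zero => rw [filter_apply_eq_apply_symmInvolutions_zero ha, card_empty]
    | succ m =>
      rw [card_filter_apply_eq_apply hr hr₀ hs ha]
      exact ih _ (by omega) hs' hN' fun k => by have := hpm k; omega
  have pairs : ∀ c ∈ s \ {a, r a}, #{P ∈ symmInvolutions r s p m | P a = c} = 0 := by
    intro c hc
    rw [card_filter_apply_eq_of_mem_sdiff hr hr₀ hs ha hc]
    have : 0 < N - 1 := by have := card_pos.2 ⟨c, hc⟩; omega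
    refine ih (N - 2) (by omega) (forall_mem_sdiff_pair_apply_mem hr hs')
      (by rw [card_sdiff_pair hr₀ hs' hc]; omega) fun k => by have := hpm (k + 1); omega
  simp only [card_symmInvolutions_eq_add_sum hr₀ hs ha, fixed, anti, sum_eq_zero pairs, add_zero]

open Nat in
lemma factorial_succ_eq_of_add_add_two_mul_eq {p m k N : ℕ} (hk : p + m + 2 * k = N + 1) :
    p * N ! + m * N ! + 2 * N * (k * (N - 1)!) = (N + 1)! := by
  rcases N.eq_zero_or_pos with rfl | hN0
  · obtain rfl : k = 0 := by omega
    simp only [factorial_zero, mul_one, mul_zero, zero_add, factorial_one]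
    omega
  · rw [factorial_succ, ← mul_factorial_pred hN0.ne', ← hk]
    ring

open Nat in
lemma card_symmInvolutions_mul_factorial (hr : Involutive r) (hr₀ : ∀ x, r x ≠ x)
    (hs : ∀ x ∈ s, r x ∈ s) {N k : ℕ} (hN : #s = 2 * N) (hk : p + m + 2 * k = N) :
    #(symmInvolutions r s p m) * (p ! * m ! * k !) = N ! := by
  induction N using Nat.strong_induction_on generalizing s p m k with
  | _ N ih =>
  obtain rfl | ⟨a, ha⟩ := s.eq_empty_or_nonempty
  · obtain ⟨rfl, rfl, rfl⟩ : p = 0 ∧ m = 0 ∧ k = 0 := by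
      simp only [card_empty] at hN; omega
    simp [symmInvolutions_empty, ← hk]
  obtain ⟨N, rfl⟩ : ∃ N', N = N' + 1 := ⟨N - 1, by have := card_pos.2 ⟨a, ha⟩; omega⟩
  have hs' := forall_mem_sdiff_pair_apply_mem hr hs (a := a)
  have hN' : #(s \ {a, r a}) = 2 * N := by rw [card_sdiff_pair hr₀ hs ha]; omega
  have fixed : #{P ∈ symmInvolutions r s p m | P a = a} * (p ! * m ! * k !) = p * N ! := by
    cases p with
    | zero => simp [filter_apply_eq_self_symmInvolutions_zero ha]
    | succ p =>
      rw [card_filter_apply_eq_self hr hr₀ hs ha,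
        ← ih N (by omega) hs' hN' (show p + m + 2 * k = N by omega), factorial_succ]
      ring
  have anti : #{P ∈ symmInvolutions r s p m | P a = r a} * (p ! * m ! * k !) = m * N ! := by
    cases m with
    | zero => simp [filter_apply_eq_apply_symmInvolutions_zero ha]
    | succ m =>
      rw [card_filter_apply_eq_apply hr hr₀ hs ha,
        ← ih N (by omega) hs' hN' (show p + m + 2 * k = N by omega), factorial_succ]
      ring
  have pairs : ∀ c ∈ s \ {a, r a},
      #{P ∈ symmInvolutions r s p m | P a = c} * (p ! * m ! * k !) = k * (N - 1)! := by
    intro c hc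
    have hN'' : #((s \ {a, r a}) \ {c, r c}) = 2 * (N - 1) := by
      rw [card_sdiff_pair hr₀ hs' hc]; omega
    rw [card_filter_apply_eq_of_mem_sdiff hr hr₀ hs ha hc]
    cases k with
    | zero =>
      rw [card_symmInvolutions_eq_zero hr hr₀ (forall_mem_sdiff_pair_apply_mem hr hs') hN''
        fun k => by omega]
      simp
    | succ k =>
      have : 0 < N := by omega
      rw [← ih (N - 1) (by omega) (forall_mem_sdiff_pair_apply_mem hr hs') hN''
        (show p + m + 2 * k = N - 1 by omega), factorial_succ]
      ring
  rw [card_symmInvolutions_eq_add_sum hr₀ hs ha, add_mul, add_mul, sum_mul, fixed, anti,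
    sum_congr rfl pairs, sum_const, hN', smul_eq_mul, factorial_succ_eq_of_add_add_two_mul_eq hk]

lemma Fin.card_filter_eq_two_mul {n : ℕ} (q : Fin (2 * n) → Prop) [DecidablePred q]
    (hq : ∀ i, q i.rev ↔ q i) :
    #{i | q i} = 2 * #{i : Fin (2 * n) | (i : ℕ) < n ∧ q i} := by
  have hrev :
      #{i : Fin (2 * n) | q i ∧ ¬(i : ℕ) < n} = #{i : Fin (2 * n) | (i : ℕ) < n ∧ q i} :=
    card_nbij' Fin.rev Fin.rev
      (fun i hi => by
        simp only [mem_coe, mem_filter, mem_univ, true_and, Fin.val_rev, hq] at hi ⊢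
        exact ⟨by omega, hi.1⟩)
      (fun i hi => by
        simp only [mem_coe, mem_filter, mem_univ, true_and, Fin.val_rev, hq] at hi ⊢
        exact ⟨hi.2, by omega⟩)
      (fun i _ => Fin.rev_rev i) (fun i _ => Fin.rev_rev i)
  have hcomm :
      #{i : Fin (2 * n) | q i ∧ (i : ℕ) < n} = #{i : Fin (2 * n) | (i : ℕ) < n ∧ q i} := by
    simp only [and_comm]
  rw [← card_filter_add_card_filter_not (s := {i | q i}) (fun i : Fin (2 * n) => (i : ℕ) < n),
    filter_filter, filter_filter, hrev, hcomm]
  omega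

lemma Fin.rev_ne_self {n : ℕ} (i : Fin (2 * n)) : i.rev ≠ i := by
  intro h
  have := congrArg Fin.val h
  rw [Fin.val_rev] at this
  omega

lemma filter_rev_involutions_eq_symmInvolutions (n mp mm : ℕ) :
    univ.filter (fun P : Perm (Fin (2 * n)) =>
        (∀ j, P (P j) = j) ∧ (∀ i, P i.rev = (P i).rev) ∧
        #{i : Fin (2 * n) | (i : ℕ) < n ∧ P i = i} = mp ∧
        #{i : Fin (2 * n) | (i : ℕ) < n ∧ P i = i.rev} = mm) =
    symmInvolutions Fin.rev univ mp mm := by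
  ext P
  simp only [mem_filter, mem_univ, true_and, mem_symmInvolutions, not_true_eq_false,
    IsEmpty.forall_iff, implies_true]
  refine and_congr_right fun _ => and_congr_right fun hrev => ?_
  rw [Fin.card_filter_eq_two_mul (fun i => P i = i) fun i => by rw [hrev, Fin.rev_inj],
    Fin.card_filter_eq_two_mul (fun i => P i = i.rev) fun i => by
      rw [hrev, Fin.rev_rev, Fin.rev_eq_iff]]
  omega

/-- The number of involutions of `{1,...,2n}` commuting with the
central reflection, with exactly `m₊` diagonal points and `m₋` anti-diagonal
points among `{1,...,n}`, equals `t_{n,m₊,m₋} = n!/(m₊! m₋! ((n-m₊-m₋)/2)!)`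
when `n - m₊ - m₋` is even and nonnegative, and `0` otherwise. -/
theorem count_doubly_symmetric_involutions (n mp mm : ℕ) :
    (Finset.univ.filter (fun P : Equiv.Perm (Fin (2 * n)) =>
        (∀ j, P (P j) = j) ∧
        (∀ i, P i.rev = (P i).rev) ∧
        (Finset.univ.filter (fun i : Fin (2 * n) => (i : ℕ) < n ∧ P i = i)).card = mp ∧
        (Finset.univ.filter (fun i : Fin (2 * n) => (i : ℕ) < n ∧ P i = i.rev)).card = mm)).card =
    if mp + mm ≤ n ∧ (n - mp - mm) % 2 = 0 then
      n.factorial / (mp.factorial * mm.factorial * ((n - mp - mm) / 2).factorial)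
    else 0 := by
  have hs : ∀ x ∈ (univ : Finset (Fin (2 * n))), x.rev ∈ univ := fun x _ => mem_univ _
  have hcard : #(univ : Finset (Fin (2 * n))) = 2 * n := by simp
  rw [filter_rev_involutions_eq_symmInvolutions]
  split_ifs with h
  · obtain ⟨k, hk⟩ : ∃ k, mp + mm + 2 * k = n := ⟨(n - mp - mm) / 2, by omega⟩
    rw [show (n - mp - mm) / 2 = k by omega, ← card_symmInvolutions_mul_factorial
      Fin.rev_involutive Fin.rev_ne_self hs hcard hk, Nat.mul_div_cancel _ (by positivity)]
  · exact card_symmInvolutions_eq_zero Fin.rev_involutive Fin.rev_ne_self hs hcard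
      fun k hk => h ⟨by omega, by omega⟩
end

section
/- Let q : ℝ → ℝ solve the Painlevé II equation q'' = sq + 2q^3 and let a(s,y), b(s,y) solve the linear system ∂a/∂s = q b, ∂b/∂s = q a − y b, ∂a/∂y = q^2 a − (q' + yq) b, ∂b/∂y = (q' − yq) a + (y^2 − s − q^2) b, with initial condition a(s,0) = −b(s,0) = e^{−U(s)} where U(s) = −∫_s^∞ q(t) dt. Then a(s,y) = −b(s,−y) e^{y^3/3 − sy} for all s, y. -/
open Set MeasureTheory

/-!
Freeze `s`, so that `q s` and `q' s` are constants and the `y`-equations form a linear system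
`Ψ' = A(y) Ψ` for `Ψ = (a, b)`. The gauge factor `e^{y³/3 - sy}` has logarithmic derivative
`y² - s`, exactly the trace of `A(y)`, and conjugating by the swap `(a, b) ↦ (b, a)` turns
`A(-y)` into `-A(y) + (y² - s)`. Hence `y ↦ -e^{y³/3 - sy} (b(-y), a(-y))` solves the same
system; at `y = 0` it equals `(-b(s,0), -a(s,0)) = (a(s,0), b(s,0))`, so by uniqueness for linear
ODEs it is `Ψ` itself.
-/

theorem ODE_solution_unique_univ_of_continuous_linear {E : Type*} [NormedAddCommGroup E]
    [NormedSpace ℝ E] {A : ℝ → E →L[ℝ] E} {f g : ℝ → E} {t₀ : ℝ} (hA : Continuous A)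
    (hf : ∀ t, HasDerivAt f (A t (f t)) t) (hg : ∀ t, HasDerivAt g (A t (g t)) t)
    (heq : f t₀ = g t₀) : f = g := by
  funext t
  obtain ⟨K, hK⟩ :=
    (isCompact_Icc (a := min t t₀ - 1) (b := max t t₀ + 1)).image (continuous_nnnorm.comp hA)
      |>.bddAbove
  have hlip : ∀ τ ∈ Ioo (min t t₀ - 1) (max t t₀ + 1), LipschitzOnWith K (A τ) univ :=
    fun τ hτ => ((A τ).lipschitz.weaken
      (hK (mem_image_of_mem _ (Ioo_subset_Icc_self hτ)))).lipschitzOnWith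
  exact ODE_solution_unique_of_mem_Ioo hlip
    ⟨by linarith [min_le_right t t₀], by linarith [le_max_right t t₀]⟩
    (fun τ _ => ⟨hf τ, trivial⟩) (fun τ _ => ⟨hg τ, trivial⟩) heq
    ⟨by linarith [min_le_left t t₀], by linarith [le_max_left t t₀]⟩

section yLax

open ContinuousLinearMap

/-- The `y`-part of the Lax pair at fixed `s`, with `Q = q s` and `Q' = q' s`. -/
noncomputable def yLaxOperator (s Q Q' y : ℝ) : ℝ × ℝ →L[ℝ] ℝ × ℝ :=
  (Q ^ 2 • fst ℝ ℝ ℝ - (Q' + y * Q) • snd ℝ ℝ ℝ).prod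
    ((Q' - y * Q) • fst ℝ ℝ ℝ + (y ^ 2 - s - Q ^ 2) • snd ℝ ℝ ℝ)

@[simp]
theorem yLaxOperator_apply (s Q Q' y : ℝ) (p : ℝ × ℝ) :
    yLaxOperator s Q Q' y p = (Q ^ 2 * p.1 - (Q' + y * Q) * p.2,
      (Q' - y * Q) * p.1 + (y ^ 2 - s - Q ^ 2) * p.2) := rfl

theorem continuous_yLaxOperator (s Q Q' : ℝ) : Continuous (yLaxOperator s Q Q') :=
  (prodₗᵢ ℝ).continuous.comp (f := fun y : ℝ =>
    (Q ^ 2 • fst ℝ ℝ ℝ - (Q' + y * Q) • snd ℝ ℝ ℝ,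
      (Q' - y * Q) • fst ℝ ℝ ℝ + (y ^ 2 - s - Q ^ 2) • snd ℝ ℝ ℝ)) (by fun_prop)

end yLax

noncomputable def yLaxReflection (s : ℝ) (f : ℝ → ℝ × ℝ) (y : ℝ) : ℝ × ℝ :=
  -Real.exp (y ^ 3 / 3 - s * y) • (f (-y)).swap

section reflection

variable {s Q Q' : ℝ} {f : ℝ → ℝ × ℝ}

theorem hasDerivAt_yLaxReflection
    (hf : ∀ y, HasDerivAt f (yLaxOperator s Q Q' y (f y)) y) (y : ℝ) :
    HasDerivAt (yLaxReflection s f) (yLaxOperator s Q Q' y (yLaxReflection s f y)) y := by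
  have hexponent : HasDerivAt (fun y => y ^ 3 / 3 - s * y) (y ^ 2 - s) y :=
    (((hasDerivAt_pow 3 y).div_const 3).sub ((hasDerivAt_id y).const_mul s)).congr_deriv
      (by ring)
  have hswap : HasDerivAt (fun y => (f (-y)).swap)
      (-(yLaxOperator s Q Q' (-y) (f (-y))).swap) y := by
    have := (ContinuousLinearEquiv.prodComm ℝ ℝ ℝ).hasFDerivAt.comp_hasDerivAt y
      ((hf (-y)).scomp y (hasDerivAt_neg y))
    simpa [Function.comp_def] using this
  refine (hexponent.exp.neg.smul hswap).congr_deriv ?_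
  ext <;> simp [yLaxReflection] <;> ring

theorem yLaxReflection_eq_self (hf : ∀ y, HasDerivAt f (yLaxOperator s Q Q' y (f y)) y)
    (h0 : (f 0).2 = -(f 0).1) : yLaxReflection s f = f :=
  ODE_solution_unique_univ_of_continuous_linear (t₀ := 0) (continuous_yLaxOperator s Q Q')
    (hasDerivAt_yLaxReflection hf) hf (by ext <;> simp [yLaxReflection, h0])

end reflection

theorem reflection_identity_baik_rains_general
    (q : ℝ → ℝ)
    (a b : ℝ → ℝ → ℝ)
    (ha_y : ∀ s y, deriv (fun y' => a s y') y =
      (q s) ^ 2 * a s y - (deriv q s + y * q s) * b s y)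
    (hb_y : ∀ s y, deriv (fun y' => b s y') y =
      (deriv q s - y * q s) * a s y + (y ^ 2 - s - (q s) ^ 2) * b s y)
    (ha_diff : ∀ s, Differentiable ℝ (fun y' => a s y'))
    (hb_diff : ∀ s, Differentiable ℝ (fun y' => b s y'))
    (hinit : ∀ s, a s 0 = Real.exp (-(-(∫ t in Set.Ioi s, q t))) ∧
      b s 0 = -Real.exp (-(-(∫ t in Set.Ioi s, q t)))) :
    ∀ s y, a s y = -b s (-y) * Real.exp (y ^ 3 / 3 - s * y) := by
  intro s y
  set f : ℝ → ℝ × ℝ := fun y => (a s y, b s y)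
  have hf : ∀ y, HasDerivAt f (yLaxOperator s (q s) (deriv q s) y (f y)) y := fun y =>
    ((ha_diff s y).hasDerivAt.prodMk (hb_diff s y).hasDerivAt).congr_deriv
      (by rw [ha_y, hb_y]; rfl)
  have hrefl := yLaxReflection_eq_self hf (by simp [f, hinit s])
  have := congrArg Prod.fst (congrFun hrefl y)
  simp only [yLaxReflection, f, Prod.smul_fst, Prod.fst_swap, smul_eq_mul] at this
  linarith

/-- Reflection identity `a(s,y) = -b(s,-y) e^{y³/3 - sy}` for the
solutions of the Lax system associated with the Painlevé II transcendent `q`,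
with initial data `a(s,0) = -b(s,0) = e^{-U(s)}`, `U(s) = -∫_s^∞ q(t) dt`. -/
theorem reflection_identity_baik_rains
    (q : ℝ → ℝ) (hq_cont : Continuous q) (hq'_cont : Continuous (deriv q))
    (hq : ∀ s, deriv (deriv q) s = s * q s + 2 * (q s) ^ 3)
    (hq_int : ∀ s : ℝ, IntegrableOn q (Set.Ioi s))
    (a b : ℝ → ℝ → ℝ)
    (ha_s : ∀ s y, deriv (fun s' => a s' y) s = q s * b s y)
    (hb_s : ∀ s y, deriv (fun s' => b s' y) s = q s * a s y - y * b s y)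
    (ha_y : ∀ s y, deriv (fun y' => a s y') y =
      (q s) ^ 2 * a s y - (deriv q s + y * q s) * b s y)
    (hb_y : ∀ s y, deriv (fun y' => b s y') y =
      (deriv q s - y * q s) * a s y + (y ^ 2 - s - (q s) ^ 2) * b s y)
    (ha_diff : ∀ s, Differentiable ℝ (fun y' => a s y'))
    (hb_diff : ∀ s, Differentiable ℝ (fun y' => b s y'))
    (hinit : ∀ s, a s 0 = Real.exp (-(-(∫ t in Set.Ioi s, q t))) ∧
      b s 0 = -Real.exp (-(-(∫ t in Set.Ioi s, q t)))) :
    ∀ s y, a s y = -b s (-y) * Real.exp (y ^ 3 / 3 - s * y) :=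
  reflection_identity_baik_rains_general q a b ha_y hb_y ha_diff hb_diff hinit
end
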